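/- There does not exist a power series G in κ[[u,v]] over a field κ of characteristic p > 0 such that v·G − u^p lies in the ideal generated by u^{p+1} + v^{p+1}. -/

import Mathlib

open MvPowerSeries

/-- There is no power series `G ∈ κ[[u,v]]` (κ of characteristic `p > 0`) such that
`v·G − u^p` lies in the ideal generated by `u^{p+1} + v^{p+1}`. -/
theorem stmt0 (p : ℕ) (hp : p.Prime) (κ : Type*) [Field κ] [CharP κ p] :
    ¬ ∃ G : MvPowerSeries (Fin 2) κ,
      (X 1 : MvPowerSeries (Fin 2) κ) * G - X 0 ^ p ∈
        Ideal.span {(X 0 : MvPowerSeries (Fin 2) κ) ^ (p + 1) + X 1 ^ (p + 1)} := by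
  rintro ⟨G, hG⟩
  rw [Ideal.mem_span_singleton] at hG
  obtain ⟨c, hc⟩ := hG
  set m : Fin 2 →₀ ℕ := Finsupp.single 0 p with hm
  have h := congrArg (MvPowerSeries.coeff m) hc
  have h1 : MvPowerSeries.coeff m ((X 1 : MvPowerSeries (Fin 2) κ) * G) = 0 := by
    rw [MvPowerSeries.coeff_mul]
    apply Finset.sum_eq_zero
    rintro ⟨a, b⟩ hab
    rw [Finset.HasAntidiagonal.mem_antidiagonal] at hab
    rw [MvPowerSeries.coeff_X]
    rcases eq_or_ne a (Finsupp.single 1 1) with rfl | hne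
    · exfalso
      have := congrArg (fun f : Fin 2 →₀ ℕ => f 1) hab
      simp [hm, Finsupp.single_apply] at this
    · rw [if_neg hne, zero_mul]
  have h2 : MvPowerSeries.coeff m
      (((X 0 : MvPowerSeries (Fin 2) κ) ^ (p + 1) + X 1 ^ (p + 1)) * c) = 0 := by
    rw [MvPowerSeries.coeff_mul]
    apply Finset.sum_eq_zero
    rintro ⟨a, b⟩ hab
    rw [Finset.HasAntidiagonal.mem_antidiagonal] at hab
    rw [map_add, MvPowerSeries.coeff_X_pow, MvPowerSeries.coeff_X_pow]
    have ha0 : a ≠ Finsupp.single 0 (p + 1) := by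
      rintro rfl
      have := congrArg (fun f : Fin 2 →₀ ℕ => f 0) hab
      simp [hm, Finsupp.single_apply] at this
      omega
    have ha1 : a ≠ Finsupp.single 1 (p + 1) := by
      rintro rfl
      have := congrArg (fun f : Fin 2 →₀ ℕ => f 1) hab
      simp [hm, Finsupp.single_apply] at this
    rw [if_neg ha0, if_neg ha1, add_zero, zero_mul]
  have h3 : MvPowerSeries.coeff m ((X 0 : MvPowerSeries (Fin 2) κ) ^ p) = 1 := by
    rw [MvPowerSeries.coeff_X_pow, if_pos rfl]
  rw [map_sub, h1, h3, h2] at h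
  simp at h
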